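/- arXiv:2512.02384 — 2 statements merged into one kernel-verified Lean document; each statement's English description precedes it below -/
import Mathlib

section
/- Fix β ∈ (0,1) and α > 1/4. For every k ∈ ℕ there exists a constant C = C(β, α, k) such that for all N ≥ 1 and all h with 0 ≤ h ≤ N^{−α}: E_{z ~ N(μ, γ²/N)}[ ( (e^z·cosh(2h) − e^{−z})/(e^z·cosh(2h) + e^{−z}) − q_{β,h} )^{2k} ] ≤ C·N^{−k}, where γ > 0 is defined by 1/γ² = 1/β² − (1 − tanh⁴(h)) and μ = γ²·tanh²(h). -/
open MeasureTheory ProbabilityTheory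

noncomputable section

/-- Standard Gaussian measure on `ℝ`. -/
def stdGaussian : Measure ℝ := gaussianReal 0 1

/-- The overlap constant `q_{β,h}`, the unique solution in `(0,1]` of the replica-symmetric
fixed point equation (set to `0` for `h = 0`). -/
def qOverlap (β h : ℝ) : ℝ :=
  if h = 0 then 0 else
    sSup {q : ℝ | q ∈ Set.Ioc (0 : ℝ) 1 ∧
      q = ∫ g, Real.tanh (β * g * Real.sqrt q + h) ^ 2 ∂stdGaussian}

/-- `q₁(β,h) = E tanh(β g √q_{β,h} + h)`. -/
def q1 (β h : ℝ) : ℝ :=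
  ∫ g, Real.tanh (β * g * Real.sqrt (qOverlap β h) + h) ∂stdGaussian

/-- Hyperbolic secant. -/
def sech (x : ℝ) : ℝ := 1 / Real.cosh x

/-- The Almeida–Thouless condition for `(β,h)`. -/
def ATCond (β h : ℝ) : Prop :=
  β ^ 2 * ∫ g, sech (β * g * Real.sqrt (qOverlap β h) + h) ^ 4 ∂stdGaussian < 1

/-- The AT condition with gap at least `g0`. -/
def ATgap (β h g0 : ℝ) : Prop :=
  β ^ 2 * ∫ g, sech (β * g * Real.sqrt (qOverlap β h) + h) ^ 4 ∂stdGaussian ≤ 1 - g0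

/-- The one-dimensional RGD/AMP update map `f_{β,λ}`. -/
def fbl (β lam z : ℝ) : ℝ :=
  ∫ g, Real.tanh (β * g * Real.sqrt (qOverlap β (β * lam * z)) + β * lam * z) ∂stdGaussian

/-- `h_* = inf{h ≥ 0 : (β,h) satisfies AT}`. -/
def hStar (β : ℝ) : ℝ := sInf {h : ℝ | 0 ≤ h ∧ ATCond β h}

/-!
With `A = cosh 2h`, the integrand is `tanh (z + c) - q` for `c = ½ log cosh 2h ≤ h²`. Since `tanh`
is `1`-Lipschitz and `|tanh x| ≤ |x|`, it is bounded by `|z - μ| + μ + c + q`, and each of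
`μ = γ² tanh² h`, `c` and `q = q_{β,h}` is `O(h²)`, with constants depending only on `β`. The
`2k`-th central moment of `N(μ, γ²/N)` is `O(N^{-k})`, and `h^{4k} ≤ N^{-4αk} ≤ N^{-k}` as `α > 1/4`.
-/

namespace Real

theorem hasDerivAt_tanh (x : ℝ) : HasDerivAt tanh (1 / cosh x ^ 2) x := by
  have h := (hasDerivAt_sinh x).div (hasDerivAt_cosh x) (cosh_pos x).ne'
  rw [← sq, ← sq, cosh_sq_sub_sinh_sq] at h
  exact h.congr_of_eventuallyEq (.of_forall tanh_eq_sinh_div_cosh)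

theorem lipschitzWith_tanh : LipschitzWith 1 tanh := by
  refine lipschitzWith_of_nnnorm_deriv_le (fun x => (hasDerivAt_tanh x).differentiableAt)
    fun x => ?_
  rw [(hasDerivAt_tanh x).deriv, ← NNReal.coe_le_coe, coe_nnnorm, norm_of_nonneg (by positivity),
    NNReal.coe_one, div_le_one (by positivity)]
  nlinarith [one_le_cosh x]

@[fun_prop]
theorem continuous_tanh : Continuous tanh :=
  lipschitzWith_tanh.continuous

theorem abs_tanh_sub_tanh_le (x y : ℝ) : |tanh x - tanh y| ≤ |x - y| := by
  simpa [dist_eq] using lipschitzWith_tanh.dist_le_mul x y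

theorem abs_tanh_le (x : ℝ) : |tanh x| ≤ |x| := by
  simpa using abs_tanh_sub_tanh_le x 0

theorem exp_mul_sub_div_exp_mul_add {A : ℝ} (hA : 0 < A) (z : ℝ) :
    (exp z * A - exp (-z)) / (exp z * A + exp (-z)) = tanh (z + log A / 2) := by
  have hs : exp (log A / 2) ^ 2 = A := by
    rw [← exp_nat_mul, Nat.cast_two, mul_div_cancel₀ _ two_ne_zero, exp_log hA]
  conv_lhs => rw [← hs]
  rw [tanh_eq_sinh_div_cosh, sinh_eq, cosh_eq, neg_add, exp_add, exp_add, exp_neg (log A / 2)]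
  field_simp

theorem log_cosh_le (x : ℝ) : log (cosh x) ≤ x ^ 2 / 2 :=
  (log_le_log (cosh_pos x) (cosh_le_exp_half_sq x)).trans_eq (log_exp _)

end Real

namespace ProbabilityTheory

variable {μ : ℝ} {v : NNReal}

lemma integrable_pow_gaussianReal (n : ℕ) : Integrable (fun x => x ^ n) (gaussianReal μ v) :=
  integrable_pow_of_mem_interior_integrableExpSet (X := id) (by simp) n

lemma integral_sq_gaussianReal : ∫ x, x ^ 2 ∂gaussianReal μ v = v + μ ^ 2 := by
  have h := variance_eq_sub (memLp_id_gaussianReal (μ := μ) (v := v) 2)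
  simp only [variance_id_gaussianReal, Pi.pow_apply, id, integral_id_gaussianReal] at h
  linarith

lemma integral_sub_pow_two_mul_gaussianReal (k : ℕ) :
    ∫ z, (z - μ) ^ (2 * k) ∂gaussianReal μ v = v ^ k * ∫ x, x ^ (2 * k) ∂gaussianReal 0 1 := by
  have hmap : (gaussianReal μ v).map (· - μ) = (gaussianReal 0 1).map (√v * ·) := by
    rw [gaussianReal_map_sub_const, gaussianReal_map_const_mul]
    congr 1
    · simp
    · ext
      simp [Real.sq_sqrt v.coe_nonneg]
  calc ∫ z, (z - μ) ^ (2 * k) ∂gaussianReal μ v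
      = ∫ y, y ^ (2 * k) ∂(gaussianReal 0 1).map (√v * ·) := by
        rw [← hmap, integral_map (by fun_prop) (by fun_prop)]
    _ = v ^ k * ∫ x, x ^ (2 * k) ∂gaussianReal 0 1 := by
        rw [integral_map (by fun_prop) (by fun_prop), ← integral_const_mul]
        simp_rw [mul_pow, pow_mul, Real.sq_sqrt v.coe_nonneg]

lemma integrable_sub_pow_gaussianReal (n : ℕ) :
    Integrable (fun z => (z - μ) ^ n) (gaussianReal μ v) := by
  have h := integrable_pow_gaussianReal (μ := μ - μ) (v := v) n
  rwa [← gaussianReal_map_sub_const, integrable_map_measure (by fun_prop) (by fun_prop)] at h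

lemma integral_mul_add_sq_gaussianReal_zero_one (a b : ℝ) :
    ∫ x, (a * x + b) ^ 2 ∂gaussianReal 0 1 = a ^ 2 + b ^ 2 := by
  have h1 := integrable_pow_gaussianReal (μ := 0) (v := 1) 1
  have h2 := integrable_pow_gaussianReal (μ := 0) (v := 1) 2
  simp only [pow_one] at h1
  have hexp : (fun x : ℝ => (a * x + b) ^ 2) =
      fun x => a ^ 2 * x ^ 2 + (2 * a * b * x + b ^ 2) := by
    ext x
    ring
  rw [hexp, integral_add (h2.const_mul _) ((h1.const_mul _).fun_add (integrable_const _)),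
    integral_add (h1.const_mul _) (integrable_const _), integral_const_mul, integral_const_mul,
    integral_sq_gaussianReal, integral_id_gaussianReal]
  simp

end ProbabilityTheory

open Real

lemma qOverlap_nonneg (β h : ℝ) : 0 ≤ qOverlap β h := by
  unfold qOverlap
  split_ifs
  · exact le_rfl
  · exact Real.sSup_nonneg fun x hx => hx.1.1.le

/-- Comparing `tanh² y ≤ y²` inside the fixed point equation gives `q ≤ β² q + h²`. -/
lemma qOverlap_le (β h : ℝ) (hβ : β ^ 2 < 1) : qOverlap β h ≤ h ^ 2 / (1 - β ^ 2) := by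
  have hb : 0 < 1 - β ^ 2 := by linarith
  unfold qOverlap
  split_ifs
  · positivity
  refine Real.sSup_le (fun x ⟨⟨hx0, _⟩, hfix⟩ => ?_) (by positivity)
  rw [_root_.stdGaussian] at hfix
  have hmono : x ≤ β ^ 2 * x + h ^ 2 := by
    calc x = ∫ g, tanh (β * g * √x + h) ^ 2 ∂gaussianReal 0 1 := hfix
      _ ≤ ∫ g, ((β * √x) * g + h) ^ 2 ∂gaussianReal 0 1 := by
        refine integral_mono ?_ ?_ fun g => ?_
        · refine (integrable_const 1).mono' (by fun_prop) (.of_forall fun g => ?_)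
          rw [norm_pow, norm_eq_abs, sq_abs]
          exact (tanh_sq_lt_one _).le
        · exact (((memLp_id_gaussianReal 2).const_mul _).add (memLp_const h)).integrable_sq
        · rw [show β * √x * g = β * g * √x by ring]
          exact sq_le_sq.mpr (abs_tanh_le _)
      _ = β ^ 2 * x + h ^ 2 := by
        rw [integral_mul_add_sq_gaussianReal_zero_one, mul_pow, Real.sq_sqrt hx0.le]
  rw [le_div_iff₀ hb]
  linarith

lemma tanh_add_sub_pow_le (z m c q : ℝ) (k : ℕ) :
    (tanh (z + c) - q) ^ (2 * k) ≤
      2 ^ (2 * k) * ((z - m) ^ (2 * k) + (|m + c| + |q|) ^ (2 * k)) := by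
  have hk := even_two_mul k
  have habs : |tanh (z + c) - q| ≤ |z - m| + (|m + c| + |q|) := calc
    |tanh (z + c) - q| ≤ |tanh (z + c) - tanh (m + c)| + (|tanh (m + c)| + |q|) := by
        linarith [abs_sub_le (tanh (z + c)) (tanh (m + c)) q, abs_sub (tanh (m + c)) q]
    _ ≤ |z - m| + (|m + c| + |q|) := by
        have := abs_tanh_sub_tanh_le (z + c) (m + c)
        rw [add_sub_add_right_eq_sub] at this
        linarith [abs_tanh_le (m + c)]
  calc (tanh (z + c) - q) ^ (2 * k) = |tanh (z + c) - q| ^ (2 * k) := (hk.pow_abs _).symm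
    _ ≤ (|z - m| + (|m + c| + |q|)) ^ (2 * k) := by gcongr
    _ ≤ 2 ^ (2 * k - 1) * (|z - m| ^ (2 * k) + (|m + c| + |q|) ^ (2 * k)) :=
        add_pow_le (abs_nonneg _) (by positivity) _
    _ ≤ 2 ^ (2 * k) * ((z - m) ^ (2 * k) + (|m + c| + |q|) ^ (2 * k)) := by
        rw [hk.pow_abs]
        gcongr
        · exact add_nonneg (hk.pow_nonneg _) (by positivity)
        · norm_num
        · omega

lemma integral_tanh_add_sub_pow_le (m c q : ℝ) (v : NNReal) (k : ℕ) :
    ∫ z, (tanh (z + c) - q) ^ (2 * k) ∂gaussianReal m v ≤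
      2 ^ (2 * k) * (v ^ k * ∫ x, x ^ (2 * k) ∂gaussianReal 0 1 + (|m + c| + |q|) ^ (2 * k)) := by
  have hint := integrable_sub_pow_gaussianReal (μ := m) (v := v) (2 * k)
  rw [← integral_sub_pow_two_mul_gaussianReal (μ := m)]
  calc _ ≤ ∫ z, 2 ^ (2 * k) * ((z - m) ^ (2 * k) + (|m + c| + |q|) ^ (2 * k)) ∂gaussianReal m v :=
        integral_mono_of_nonneg (.of_forall fun z => (even_two_mul k).pow_nonneg _)
          ((hint.fun_add (integrable_const _)).const_mul _)
          (.of_forall fun z => tanh_add_sub_pow_le z m c q k)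
    _ = _ := by
        rw [integral_const_mul, integral_add hint (integrable_const _)]
        simp

lemma pow_four_le_inv_of_le_rpow_neg {x h α : ℝ} (hx : 1 ≤ x) (hα : 1 / 4 ≤ α) (h0 : 0 ≤ h)
    (hh : h ≤ x ^ (-α)) : h ^ 4 ≤ x⁻¹ := calc
  h ^ 4 ≤ (x ^ (-α)) ^ 4 := by gcongr
  _ = x ^ (-(4 * α)) := by
      rw [← Real.rpow_natCast, ← Real.rpow_mul (by linarith)]
      ring_nf
  _ ≤ x ^ (-1 : ℝ) := Real.rpow_le_rpow_of_exponent_le hx (by linarith)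
  _ = x⁻¹ := Real.rpow_neg_one x

lemma sq_le_div_one_sub_sq {β γ t : ℝ} (hβ : β ≠ 0) (hγ : γ ≠ 0) (hβ1 : β ^ 2 < 1)
    (ht : 0 ≤ t) (h : 1 / γ ^ 2 = 1 / β ^ 2 - (1 - t)) : γ ^ 2 ≤ β ^ 2 / (1 - β ^ 2) := by
  rw [le_div_iff₀ (by linarith)]
  field_simp at h
  nlinarith [show 0 ≤ γ ^ 2 * β ^ 2 * t by positivity]

lemma abs_add_log_cosh_add_abs_qOverlap_le (β γ h : ℝ) (hβ : β ^ 2 < 1)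
    (hγ : γ ^ 2 ≤ β ^ 2 / (1 - β ^ 2)) :
    |γ ^ 2 * tanh h ^ 2 + log (cosh (2 * h)) / 2| + |qOverlap β h| ≤ 2 / (1 - β ^ 2) * h ^ 2 := by
  have hb : 0 < 1 - β ^ 2 := by linarith
  have hμ : γ ^ 2 * tanh h ^ 2 ≤ β ^ 2 / (1 - β ^ 2) * h ^ 2 :=
    mul_le_mul hγ (sq_le_sq.mpr (abs_tanh_le h)) (by positivity) (by positivity)
  have hc := log_cosh_le (2 * h)
  have hq := qOverlap_le β h hβ
  have hc0 : 0 ≤ log (cosh (2 * h)) / 2 := div_nonneg (log_nonneg (one_le_cosh _)) two_pos.le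
  rw [abs_of_nonneg (add_nonneg (by positivity) hc0), abs_of_nonneg (qOverlap_nonneg β h),
    show 2 / (1 - β ^ 2) * h ^ 2 = β ^ 2 / (1 - β ^ 2) * h ^ 2 + h ^ 2 + h ^ 2 / (1 - β ^ 2) by
      field_simp; ring]
  linarith

/-- Control of the effective overlap: for `β ∈ (0,1)`, `α > 1/4`, and any
`k`, there is `C = C(β,α,k)` such that for all `N ≥ 1` and `0 ≤ h ≤ N^{−α}`,
`E_{z ~ N(μ, γ²/N)}[((e^z cosh(2h) − e^{−z})/(e^z cosh(2h)+e^{−z}) − q_{β,h})^{2k}] ≤ C N^{−k}`,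
where `1/γ² = 1/β² − (1 − tanh⁴ h)`, `γ > 0`, and `μ = γ² tanh² h`. -/
theorem stmt10 (β α : ℝ) (hβ0 : 0 < β) (hβ1 : β < 1) (hα : 1 / 4 < α) (k : ℕ) :
    ∃ C : ℝ, 0 < C ∧ ∀ N : ℕ, 1 ≤ N → ∀ h : ℝ, 0 ≤ h → h ≤ (N : ℝ) ^ (-α) →
      ∀ γ μ0 : ℝ, 0 < γ →
        1 / γ ^ 2 = 1 / β ^ 2 - (1 - Real.tanh h ^ 4) →
        μ0 = γ ^ 2 * Real.tanh h ^ 2 →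
        (∫ z, ((Real.exp z * Real.cosh (2 * h) - Real.exp (-z)) /
              (Real.exp z * Real.cosh (2 * h) + Real.exp (-z)) - qOverlap β h) ^ (2 * k)
            ∂gaussianReal μ0 (Real.toNNReal (γ ^ 2 / N)))
          ≤ C / (N : ℝ) ^ k := by
  have hβ : β ^ 2 < 1 := by nlinarith
  set K := β ^ 2 / (1 - β ^ 2)
  set L := 2 / (1 - β ^ 2)
  set M := ∫ x, x ^ (2 * k) ∂gaussianReal 0 1
  have hM : 0 ≤ M := integral_nonneg fun x => (even_two_mul k).pow_nonneg x
  have hb : 0 < 1 - β ^ 2 := by linarith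
  refine ⟨2 ^ (2 * k) * (K ^ k * M + L ^ (2 * k)), by positivity, ?_⟩
  intro N hN h h0 hhN γ μ0 hγ hγeq hμ0
  subst hμ0
  have hγK : γ ^ 2 ≤ K := sq_le_div_one_sub_sq hβ0.ne' hγ.ne' hβ (by positivity) hγeq
  have hD := abs_add_log_cosh_add_abs_qOverlap_le β γ h hβ hγK
  have hh := pow_four_le_inv_of_le_rpow_neg (by exact_mod_cast hN) hα.le h0 hhN
  simp_rw [exp_mul_sub_div_exp_mul_add (cosh_pos (2 * h))]
  calc _ ≤ 2 ^ (2 * k) * ((γ ^ 2 / N) ^ k * M + (L * h ^ 2) ^ (2 * k)) := by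
        refine (integral_tanh_add_sub_pow_le _ _ _ _ k).trans ?_
        rw [Real.coe_toNNReal _ (by positivity)]
        gcongr
    _ ≤ 2 ^ (2 * k) * (K ^ k / N ^ k * M + L ^ (2 * k) * (N : ℝ)⁻¹ ^ k) := by
        rw [div_pow, show (L * h ^ 2) ^ (2 * k) = L ^ (2 * k) * (h ^ 4) ^ k by ring_nf]
        gcongr
    _ = _ := by
        rw [inv_pow]
        field_simp
end
end

section
/- Fix β ∈ (0,1) and α > 1/4. For h ∈ ℝ define g_N(z) = ( cosh(z) + sinh²(h)·e^z ) / ( (1 + sinh²(h))·e^{tanh²(h)·z}·e^{(z²/2)·(1 − tanh⁴(h))} ). Then for every η > 0 there exists N₀ such that for all N ≥ N₀ and all h with 0 ≤ h ≤ N^{−α}: | E_{z ~ N(0, β²/N)}[ g_N(z)^{2N} ] − 1 | ≤ η. -/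
open MeasureTheory ProbabilityTheory

noncomputable section

/-! With `m = tanh² h`, the integrand is `g_N(z) = exp φ_m(z)`, where
`φ_m(z) = log (cosh z + m sinh z) - m z - (1 - m²) z² / 2` is the remainder of the second-order
Taylor expansion of the cumulant generating function of a `±1` spin with mean `m`. Its
derivatives are controlled by the tilted mean `f = (sinh z + m cosh z) / (cosh z + m sinh z)`,
which satisfies `f' = 1 - f²` and `|f| ≤ 1`; this gives `|φ_m(z)| ≤ 2 |z|³` and, since
`φ_m'' = m² - f² ≤ m²`, also `φ_m(z) ≤ m² z² / 2`.

Writing `z = β x / √N` with `x` standard Gaussian, the exponent `2N φ_m(z)` is at most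
`2 m² β² x² ≤ x² / 4`, because `β < 1` and `m² ≤ h⁴ ≤ N^{-4α} ≤ 1/N ≤ 1/4`, and at most
`4 β³ |x|³ / √N` in absolute value. Hence `|exp (2N φ_m(z)) - 1| ≤ 4 β³ |x|³ exp (x² / 4) / √N`, which is integrable, and the
expectation is `1 + O(N^{-1/2})`.
-/

open Filter Topology

def spinMgf (m z : ℝ) : ℝ := Real.cosh z + m * Real.sinh z

def spinMean (m z : ℝ) : ℝ := (Real.sinh z + m * Real.cosh z) / spinMgf m z

def spinCgfRemainder (m z : ℝ) : ℝ :=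
  Real.log (spinMgf m z) - m * z - (1 - m ^ 2) / 2 * z ^ 2

lemma abs_sub_apply_zero_le_of_abs_deriv_le {u u' : ℝ → ℝ} {C : ℝ} (k : ℕ)
    (hu : ∀ t, HasDerivAt u (u' t) t) (hbound : ∀ t, |u' t| ≤ C * |t| ^ k) (z : ℝ) :
    |u z - u 0| ≤ C * |z| ^ (k + 1) := by
  have hC : 0 ≤ C := by simpa using (abs_nonneg _).trans (hbound 1)
  have hmvt := Convex.norm_image_sub_le_of_norm_hasDerivWithin_le (C := C * |z| ^ k)
    (fun t _ ↦ (hu t).hasDerivWithinAt) (fun t ht ↦ ?_) (convex_uIcc 0 z)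
    Set.left_mem_uIcc Set.right_mem_uIcc
  · simpa [pow_succ, mul_assoc] using hmvt
  · have hzt : |t| ≤ |z| := by simpa using Set.abs_sub_left_of_mem_uIcc ht
    exact (hbound t).trans (by gcongr)

lemma apply_zero_le_of_hasDerivAt {u u' : ℝ → ℝ} (hu : ∀ t, HasDerivAt u (u' t) t)
    (hsign : ∀ t, 0 ≤ t * u' t) (z : ℝ) : u 0 ≤ u z := by
  have hcont : Continuous u := continuous_iff_continuousAt.2 fun t ↦ (hu t).continuousAt
  rcases le_total 0 z with hz | hz
  · refine monotoneOn_of_hasDerivWithinAt_nonneg (convex_Ici 0) hcont.continuousOn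
      (fun t _ ↦ (hu t).hasDerivWithinAt) (fun t ht ↦ ?_) Set.self_mem_Ici hz hz
    rw [interior_Ici] at ht
    exact nonneg_of_mul_nonneg_right (hsign t) ht
  · refine antitoneOn_of_hasDerivWithinAt_nonpos (convex_Iic 0) hcont.continuousOn
      (fun t _ ↦ (hu t).hasDerivWithinAt) (fun t ht ↦ ?_) hz Set.self_mem_Iic hz
    rw [interior_Iic] at ht
    exact nonpos_of_mul_nonneg_right (hsign t) ht

section Spin

variable {m : ℝ}

lemma spinMgf_pos (hm : |m| ≤ 1) (z : ℝ) : 0 < spinMgf m z := by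
  have hsinh : |Real.sinh z| < Real.cosh z :=
    abs_lt_of_sq_lt_sq (by nlinarith [Real.cosh_sq z]) (Real.cosh_pos z).le
  have : |m * Real.sinh z| < Real.cosh z :=
    (abs_mul m _).trans_lt ((mul_le_of_le_one_left (abs_nonneg _) hm).trans_lt hsinh)
  unfold spinMgf
  linarith [neg_abs_le (m * Real.sinh z)]

lemma spinMean_zero (m : ℝ) : spinMean m 0 = m := by simp [spinMean, spinMgf]

lemma abs_spinMean_le_one (hm : |m| ≤ 1) (z : ℝ) : |spinMean m z| ≤ 1 := by
  have hF := spinMgf_pos hm z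
  have hdiff : spinMgf m z ^ 2 - (Real.sinh z + m * Real.cosh z) ^ 2 = 1 - m ^ 2 := by
    rw [spinMgf]
    linear_combination (1 - m ^ 2) * Real.cosh_sq z
  have hm2 : m ^ 2 ≤ 1 := by nlinarith [sq_abs m, abs_nonneg m]
  rw [spinMean, abs_div, abs_of_pos hF, div_le_one hF, ← abs_of_pos hF, ← sq_le_sq]
  linarith

lemma hasDerivAt_spinMgf (m z : ℝ) :
    HasDerivAt (spinMgf m) (Real.sinh z + m * Real.cosh z) z :=
  (Real.hasDerivAt_cosh z).add ((Real.hasDerivAt_sinh z).const_mul m)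

lemma hasDerivAt_spinMean (hm : |m| ≤ 1) (z : ℝ) :
    HasDerivAt (spinMean m) (1 - spinMean m z ^ 2) z := by
  have hF := (spinMgf_pos hm z).ne'
  have hS : HasDerivAt (fun y ↦ Real.sinh y + m * Real.cosh y) (spinMgf m z) z :=
    (Real.hasDerivAt_sinh z).add ((Real.hasDerivAt_cosh z).const_mul m)
  refine (hS.div (hasDerivAt_spinMgf m z) hF).congr_deriv ?_
  rw [spinMean]
  field_simp

lemma hasDerivAt_spinCgfRemainder (hm : |m| ≤ 1) (z : ℝ) :
    HasDerivAt (spinCgfRemainder m) (spinMean m z - m - (1 - m ^ 2) * z) z := by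
  have hlog := (hasDerivAt_spinMgf m z).log (spinMgf_pos hm z).ne'
  refine ((hlog.sub ((hasDerivAt_id z).const_mul m)).sub
    ((hasDerivAt_pow 2 z).const_mul ((1 - m ^ 2) / 2))).congr_deriv ?_
  simp only [spinMean, Nat.cast_ofNat]
  ring

lemma abs_spinMean_sub_le (hm : |m| ≤ 1) (z : ℝ) : |spinMean m z - m| ≤ |z| := by
  have := abs_sub_apply_zero_le_of_abs_deriv_le (C := 1) 0 (hasDerivAt_spinMean hm)
    (fun t ↦ ?_) z
  · simpa [spinMean_zero] using this
  · have := abs_spinMean_le_one hm t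
    rw [pow_zero, mul_one, abs_le]
    constructor <;> nlinarith [sq_abs (spinMean m t), abs_nonneg (spinMean m t)]

lemma abs_spinMean_sub_linear_le (hm : |m| ≤ 1) (z : ℝ) :
    |spinMean m z - m - (1 - m ^ 2) * z| ≤ 2 * |z| ^ 2 := by
  have hu : ∀ t, HasDerivAt (fun y ↦ spinMean m y - (1 - m ^ 2) * y) (m ^ 2 - spinMean m t ^ 2) t :=
    fun t ↦ by
      refine ((hasDerivAt_spinMean hm t).sub
        ((hasDerivAt_id t).const_mul (1 - m ^ 2))).congr_deriv ?_
      ring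
  have := abs_sub_apply_zero_le_of_abs_deriv_le (C := 2) 1 hu (fun t ↦ ?_) z
  · simpa [spinMean_zero, sub_right_comm] using this
  · have hsum : |m + spinMean m t| ≤ 2 :=
      (abs_add_le _ _).trans (by linarith [abs_spinMean_le_one hm t])
    calc |m ^ 2 - spinMean m t ^ 2| = |m - spinMean m t| * |m + spinMean m t| := by
          rw [← abs_mul]; ring_nf
      _ ≤ |t| * 2 := by
          rw [abs_sub_comm]
          exact mul_le_mul (abs_spinMean_sub_le hm t) hsum (abs_nonneg _) (abs_nonneg _)
      _ = 2 * |t| ^ 1 := by ring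

lemma abs_spinCgfRemainder_le (hm : |m| ≤ 1) (z : ℝ) : |spinCgfRemainder m z| ≤ 2 * |z| ^ 3 := by
  simpa [spinCgfRemainder, spinMgf] using abs_sub_apply_zero_le_of_abs_deriv_le 2
    (hasDerivAt_spinCgfRemainder hm) (abs_spinMean_sub_linear_le hm) z

lemma spinCgfRemainder_le (hm : |m| ≤ 1) (z : ℝ) : spinCgfRemainder m z ≤ m ^ 2 * z ^ 2 / 2 := by
  have hu : ∀ t, HasDerivAt (fun y ↦ m ^ 2 * y ^ 2 / 2 - spinCgfRemainder m y)
      (t - (spinMean m t - m)) t := fun t ↦ by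
    refine ((((hasDerivAt_pow 2 t).const_mul (m ^ 2)).div_const 2).sub
      (hasDerivAt_spinCgfRemainder hm t)).congr_deriv ?_
    simp only [Nat.cast_ofNat]
    ring
  have hsign : ∀ t, 0 ≤ t * (t - (spinMean m t - m)) := fun t ↦ by
    have hprod : t * (spinMean m t - m) ≤ |t| * |t| :=
      (le_abs_self _).trans ((abs_mul _ _).trans_le
        (mul_le_mul_of_nonneg_left (abs_spinMean_sub_le hm t) (abs_nonneg t)))
    nlinarith [abs_mul_abs_self t]
  simpa [spinCgfRemainder, spinMgf] using apply_zero_le_of_hasDerivAt hu hsign z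

end Spin

lemma abs_tanh_le_abs (x : ℝ) : |Real.tanh x| ≤ |x| := by
  simpa [spinMean, spinMgf, ← Real.tanh_eq_sinh_div_cosh] using
    abs_spinMean_sub_le (m := 0) (by simp) x

lemma abs_tanh_sq_le_one (x : ℝ) : |Real.tanh x ^ 2| ≤ 1 := by
  rw [abs_of_nonneg (sq_nonneg _)]
  exact (Real.tanh_sq_lt_one x).le

lemma tanh_pow_four_le_inv {α h N : ℝ} (hα : 1 / 4 ≤ α) (hN : 1 ≤ N) (hh0 : 0 ≤ h)
    (hh : h ≤ N ^ (-α)) : Real.tanh h ^ 4 ≤ N⁻¹ :=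
  calc Real.tanh h ^ 4 = |Real.tanh h| ^ 4 := (Even.pow_abs (by decide) _).symm
    _ ≤ h ^ 4 := pow_le_pow_left₀ (abs_nonneg _)
        ((abs_tanh_le_abs h).trans_eq (abs_of_nonneg hh0)) 4
    _ ≤ (N ^ (-α)) ^ 4 := pow_le_pow_left₀ hh0 hh 4
    _ = N ^ (-α * 4) := by
        rw [← Real.rpow_natCast, ← Real.rpow_mul (by linarith)]
        norm_num
    _ ≤ N ^ (-1 : ℝ) := Real.rpow_le_rpow_of_exponent_le hN (by linarith)
    _ = N⁻¹ := Real.rpow_neg_one N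

lemma reweighting_eq_exp_spinCgfRemainder (h z : ℝ) :
    (Real.cosh z + Real.sinh h ^ 2 * Real.exp z) /
        ((1 + Real.sinh h ^ 2) * Real.exp (Real.tanh h ^ 2 * z) *
          Real.exp (z ^ 2 / 2 * (1 - Real.tanh h ^ 4))) =
      Real.exp (spinCgfRemainder (Real.tanh h ^ 2) z) := by
  have hm := abs_tanh_sq_le_one h
  have hc := (Real.cosh_pos h).ne'
  have hnum : Real.cosh z + Real.sinh h ^ 2 * Real.exp z =
      Real.cosh h ^ 2 * spinMgf (Real.tanh h ^ 2) z := by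
    rw [spinMgf, Real.tanh_eq_sinh_div_cosh, ← Real.cosh_add_sinh z]
    field_simp
    linear_combination (-Real.cosh z) * Real.cosh_sq h
  rw [hnum, ← Real.cosh_sq', spinCgfRemainder, Real.exp_sub, Real.exp_sub,
    Real.exp_log (spinMgf_pos hm z)]
  field_simp

lemma integrable_abs_pow_mul_exp_sq_div_four_gaussianReal (k : ℕ) :
    Integrable (fun x ↦ |x| ^ k * Real.exp (x ^ 2 / 4)) (gaussianReal 0 1) := by
  rw [gaussianReal_of_var_ne_zero 0 one_ne_zero, integrable_withDensity_iff_integrable_smul'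
    (measurable_gaussianPDF 0 1) (ae_of_all _ fun _ ↦ gaussianPDF_lt_top)]
  refine (((integrable_rpow_mul_exp_neg_mul_sq (b := 1 / 4) (by norm_num)
    (s := k) (by linarith [k.cast_nonneg (α := ℝ)])).abs).const_mul
      (Real.sqrt (2 * Real.pi))⁻¹).congr (ae_of_all _ fun x ↦ ?_)
  dsimp only
  rw [toReal_gaussianPDF, gaussianPDFReal_def, Real.rpow_natCast, abs_mul, abs_pow,
    Real.abs_exp, smul_eq_mul, NNReal.coe_one, mul_one]
  dsimp only
  rw [sub_zero, show -(1 / 4) * x ^ 2 = -x ^ 2 / (2 * 1) + x ^ 2 / 4 by ring, Real.exp_add]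
  ring

lemma abs_exp_sub_one_le_mul_exp {t M : ℝ} (ht : t ≤ M) (hM : 0 ≤ M) :
    |Real.exp t - 1| ≤ Real.exp M * |t| := by
  have := Convex.norm_image_sub_le_of_norm_hasDerivWithin_le (C := Real.exp M)
    (fun s _ ↦ (Real.hasDerivAt_exp s).hasDerivWithinAt) (fun s hs ↦ ?_) (convex_uIcc 0 t)
    Set.left_mem_uIcc Set.right_mem_uIcc
  · simpa using this
  · rw [Real.norm_eq_abs, Real.abs_exp, Real.exp_le_exp]
    exact hs.2.trans (max_le hM ht)

lemma abs_integral_gaussianReal_exp_sub_one_le {F : ℝ → ℝ} {A : ℝ} (hF : Measurable F)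
    (hup : ∀ x, F x ≤ x ^ 2 / 4) (hcub : ∀ x, |F x| ≤ A * |x| ^ 3) :
    |∫ x, Real.exp (F x) ∂gaussianReal 0 1 - 1| ≤
      A * ∫ x, |x| ^ 3 * Real.exp (x ^ 2 / 4) ∂gaussianReal 0 1 := by
  have hint : Integrable (fun x ↦ Real.exp (F x)) (gaussianReal 0 1) :=
    (integrable_abs_pow_mul_exp_sq_div_four_gaussianReal 0).mono' hF.exp.aestronglyMeasurable
      (ae_of_all _ fun x ↦ by simpa using hup x)
  have hpt : ∀ x, |Real.exp (F x) - 1| ≤ A * (|x| ^ 3 * Real.exp (x ^ 2 / 4)) := fun x ↦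
    calc |Real.exp (F x) - 1| ≤ Real.exp (x ^ 2 / 4) * |F x| :=
          abs_exp_sub_one_le_mul_exp (hup x) (by positivity)
      _ ≤ Real.exp (x ^ 2 / 4) * (A * |x| ^ 3) := by gcongr; exact hcub x
      _ = A * (|x| ^ 3 * Real.exp (x ^ 2 / 4)) := by ring
  calc |∫ x, Real.exp (F x) ∂gaussianReal 0 1 - 1|
      = |∫ x, (Real.exp (F x) - 1) ∂gaussianReal 0 1| := by
        rw [integral_sub hint (integrable_const 1)]
        simp
    _ ≤ ∫ x, |Real.exp (F x) - 1| ∂gaussianReal 0 1 := abs_integral_le_integral_abs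
    _ ≤ ∫ x, A * (|x| ^ 3 * Real.exp (x ^ 2 / 4)) ∂gaussianReal 0 1 :=
        integral_mono (hint.sub (integrable_const 1)).abs
          ((integrable_abs_pow_mul_exp_sq_div_four_gaussianReal 3).const_mul A) hpt
    _ = A * ∫ x, |x| ^ 3 * Real.exp (x ^ 2 / 4) ∂gaussianReal 0 1 := integral_const_mul A _

lemma integral_gaussianReal_eq_integral_mul {E : Type*} [NormedAddCommGroup E]
    [NormedSpace ℝ E] (f : ℝ → E) {σ : ℝ} (hσ : σ ≠ 0) :
    ∫ z, f z ∂gaussianReal 0 (σ ^ 2).toNNReal = ∫ x, f (σ * x) ∂gaussianReal 0 1 := by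
  rw [← (measurableEmbedding_mulLeft₀ hσ).integral_map, gaussianReal_map_const_mul]
  congr 2
  · rw [mul_zero]
  · rw [mul_one, Real.toNNReal_of_nonneg]

lemma abs_integral_exp_mul_spinCgfRemainder_sub_one_le {m c σ : ℝ} (hm : |m| ≤ 1)
    (hc : 0 ≤ c) (hσ : 0 ≤ σ) (hcmσ : c * m ^ 2 * σ ^ 2 ≤ 1 / 2) :
    |∫ x, Real.exp (c * spinCgfRemainder m (σ * x)) ∂gaussianReal 0 1 - 1| ≤
      2 * c * σ ^ 3 * ∫ x, |x| ^ 3 * Real.exp (x ^ 2 / 4) ∂gaussianReal 0 1 := by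
  have hcont : Continuous (spinCgfRemainder m) :=
    continuous_iff_continuousAt.2 fun z ↦ (hasDerivAt_spinCgfRemainder hm z).continuousAt
  refine abs_integral_gaussianReal_exp_sub_one_le (by fun_prop) (fun x ↦ ?_) (fun x ↦ ?_)
  · calc c * spinCgfRemainder m (σ * x) ≤ c * (m ^ 2 * (σ * x) ^ 2 / 2) :=
          mul_le_mul_of_nonneg_left (spinCgfRemainder_le hm _) hc
      _ = c * m ^ 2 * σ ^ 2 * x ^ 2 / 2 := by ring
      _ ≤ 1 / 2 * x ^ 2 / 2 := by gcongr
      _ = x ^ 2 / 4 := by ring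
  · calc |c * spinCgfRemainder m (σ * x)| = c * |spinCgfRemainder m (σ * x)| := by
          rw [abs_mul, abs_of_nonneg hc]
      _ ≤ c * (2 * |σ * x| ^ 3) := by gcongr; exact abs_spinCgfRemainder_le hm _
      _ = 2 * c * σ ^ 3 * |x| ^ 3 := by rw [abs_mul, abs_of_nonneg hσ]; ring

lemma abs_integral_exp_two_mul_spinCgfRemainder_sub_one_le {m β : ℝ} {N : ℕ} (hm : |m| ≤ 1)
    (hm2 : m ^ 2 ≤ 4⁻¹) (hβ0 : 0 < β) (hβ1 : β ≤ 1) (hN : 0 < N) :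
    |∫ x, Real.exp ((2 * N : ℕ) * spinCgfRemainder m (β / √N * x)) ∂gaussianReal 0 1 - 1| ≤
      4 * β ^ 3 * (∫ x, |x| ^ 3 * Real.exp (x ^ 2 / 4) ∂gaussianReal 0 1) / √N := by
  have hNpos : (0 : ℝ) < N := by exact_mod_cast hN
  have hσ : (β / √N) ^ 2 = β ^ 2 / N := by rw [div_pow, Real.sq_sqrt hNpos.le]
  have hσ3 : (β / √N) ^ 3 = β ^ 3 / (N * √N) := by
    rw [div_pow, pow_succ √(N : ℝ), Real.sq_sqrt hNpos.le]
  refine (abs_integral_exp_mul_spinCgfRemainder_sub_one_le hm (by positivity) (by positivity)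
    ?_).trans_eq ?_
  · calc ((2 * N : ℕ) : ℝ) * m ^ 2 * (β / √N) ^ 2 = 2 * m ^ 2 * β ^ 2 := by
          rw [hσ]
          push_cast
          field_simp
      _ ≤ 2 * 4⁻¹ * 1 := by gcongr; exact pow_le_one₀ hβ0.le hβ1
      _ = 1 / 2 := by norm_num
  · rw [hσ3]
    push_cast
    field_simp
    ring

/-- Control of the reweighting factor: for `β ∈ (0,1)` and `α > 1/4`,
for every `η > 0` there is `N₀` such that for all `N ≥ N₀` and `0 ≤ h ≤ N^{−α}`,
`|E_{z ~ N(0, β²/N)}[g_N(z)^{2N}] − 1| ≤ η`, where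
`g_N(z) = (cosh z + sinh²(h) e^z)/((1 + sinh²(h)) e^{tanh²(h) z} e^{(z²/2)(1 − tanh⁴ h)})`. -/
theorem stmt11 (β α : ℝ) (hβ0 : 0 < β) (hβ1 : β < 1) (hα : 1 / 4 < α) :
    ∀ η : ℝ, 0 < η → ∃ N0 : ℕ, ∀ N : ℕ, N0 ≤ N → ∀ h : ℝ, 0 ≤ h → h ≤ (N : ℝ) ^ (-α) →
      |(∫ z, ((Real.cosh z + Real.sinh h ^ 2 * Real.exp z) /
            ((1 + Real.sinh h ^ 2) * Real.exp (Real.tanh h ^ 2 * z) *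
              Real.exp (z ^ 2 / 2 * (1 - Real.tanh h ^ 4)))) ^ (2 * N)
          ∂gaussianReal 0 (Real.toNNReal (β ^ 2 / N))) - 1| ≤ η := by
  intro η hη
  set K := ∫ x, |x| ^ 3 * Real.exp (x ^ 2 / 4) ∂gaussianReal 0 1
  have hlim : Tendsto (fun N : ℕ ↦ 4 * β ^ 3 * K / √N) atTop (𝓝 0) := by
    simpa [div_eq_mul_inv] using (tendsto_inv_atTop_zero.comp (Real.tendsto_sqrt_atTop.comp
      tendsto_natCast_atTop_atTop)).const_mul (4 * β ^ 3 * K)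
  obtain ⟨N0, hN0⟩ := eventually_atTop.1
    ((hlim.eventually (ge_mem_nhds hη)).and (eventually_ge_atTop 4))
  refine ⟨N0, fun N hN h hh0 hh ↦ ?_⟩
  obtain ⟨hsmall, hN4⟩ := hN0 N hN
  have hN : (4 : ℝ) ≤ N := by exact_mod_cast hN4
  have ht4 : (Real.tanh h ^ 2) ^ 2 ≤ 4⁻¹ := by
    rw [← pow_mul]
    exact (tanh_pow_four_le_inv hα.le (by linarith) hh0 hh).trans (inv_anti₀ (by norm_num) hN)
  simp_rw [reweighting_eq_exp_spinCgfRemainder, ← Real.exp_nat_mul]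
  rw [show β ^ 2 / N = (β / √N) ^ 2 by rw [div_pow, Real.sq_sqrt (by positivity)],
    integral_gaussianReal_eq_integral_mul _ (by positivity)]
  exact (abs_integral_exp_two_mul_spinCgfRemainder_sub_one_le (abs_tanh_sq_le_one h) ht4 hβ0
    hβ1.le (by omega)).trans hsmall
end
end
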